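/- Let S be a Noetherian domain with quotient field K, let 𝔟 be a nonzero ideal of S, let 𝔟_• be a graded family of nonzero ideals in S that is 𝔟-equivalent, and let v be a valuation of K supported on S. Then v̂(𝔟_•) = v(𝔟). -/
import Mathlib


open Filter Polynomial
open scoped ENNReal NNReal

set_option synthInstance.maxHeartbeats 1000000
set_option maxHeartbeats 1000000

universe u

section Preamble

variable {S : Type u} [CommRing S]

/-- A graded family of ideals: `a 0 = S` and `a p * a q ⊆ a (p + q)` for all `p, q`. -/
def GradedFamily (a : ℕ → Ideal S) : Prop :=
  a 0 = ⊤ ∧ ∀ p q : ℕ, a p * a q ≤ a (p + q)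

/-- A filtration of ideals: a graded family which is descending. -/
def IdealFiltration (a : ℕ → Ideal S) : Prop :=
  GradedFamily a ∧ ∀ p : ℕ, a (p + 1) ≤ a p

/-- The integral closure of an ideal `I`: the ideal of all elements `x` satisfying an
equation of integral dependence `x ^ n + c 1 * x ^ (n - 1) + ⋯ + c n = 0` with `c i ∈ I ^ i`. -/
noncomputable def intClosure (I : Ideal S) : Ideal S :=
  Ideal.span {x : S | ∃ n : ℕ, 0 < n ∧ ∃ c : ℕ → S,
    (∀ i, 1 ≤ i → i ≤ n → c i ∈ I ^ i) ∧
    x ^ n + ∑ i ∈ Finset.Icc 1 n, c i * x ^ (n - i) = 0}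

/-- The resurgence `ρ(a, b) = sup { s / r : ¬ a s ⊆ b r }` (as an extended real number,
with `sSup ∅ = ⊥`). -/
noncomputable def resurgence (a b : ℕ → Ideal S) : EReal :=
  sSup {x : EReal | ∃ s r : ℕ, 0 < s ∧ 0 < r ∧ ¬ a s ≤ b r ∧
    x = (((s : ℝ) / (r : ℝ) : ℝ) : EReal)}

/-- The asymptotic resurgence `ρ̂(a, b) = sup { s / r : ¬ a (s*t) ⊆ b (r*t) for all t ≫ 1}`. -/
noncomputable def asympResurgence (a b : ℕ → Ideal S) : EReal :=
  sSup {x : EReal | ∃ s r : ℕ, 0 < s ∧ 0 < r ∧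
    (∀ᶠ t : ℕ in atTop, ¬ a (s * t) ≤ b (r * t)) ∧
    x = (((s : ℝ) / (r : ℝ) : ℝ) : EReal)}

/-- The `k`-th Veronese subalgebra of the Rees algebra of the graded family `b` is a
standard graded `S`-algebra, i.e. `b (k*n) = (b k) ^ n` for all `n ≥ 1`. -/
def StdVeronese (b : ℕ → Ideal S) (k : ℕ) : Prop :=
  ∀ n : ℕ, 1 ≤ n → b (k * n) = b k ^ n

/-- The Rees algebra `ℛ(b) = ⊕ₙ bₙ tⁿ ⊆ S[t]` of a graded family, as a set of polynomials. -/
def ReesSet (b : ℕ → Ideal S) : Set (Polynomial S) :=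
  {p : Polynomial S | ∀ n : ℕ, p.coeff n ∈ b n}

/-- `ℛ(b')` is a finitely generated `ℛ(b)`-module: there is a finite set `G ⊆ ℛ(b')`
such that every element of `ℛ(b')` is an `ℛ(b)`-linear combination of elements of `G`. -/
def ReesFGModule (b b' : ℕ → Ideal S) : Prop :=
  ∃ G : Finset (Polynomial S), (G : Set (Polynomial S)) ⊆ ReesSet b' ∧
    ∀ p ∈ ReesSet b', ∃ c : Polynomial S → Polynomial S,
      (∀ g ∈ G, c g ∈ ReesSet b) ∧ p = ∑ g ∈ G, c g * g

/-- A graded family `b` is `bb`-equivalent (for an ideal `bb`) if for some `k`,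
`b (i + k) ⊆ bb ^ i ⊆ b i` for all `i ≥ 1`. -/
def BEquivalent (bb : Ideal S) (b : ℕ → Ideal S) : Prop :=
  ∃ k : ℕ, ∀ i : ℕ, 1 ≤ i → b (i + k) ≤ bb ^ i ∧ bb ^ i ≤ b i

/-- `β_n(a, b) = inf { d ≥ 1 : ¬ a n ⊆ b d }`, with `inf ∅ = ∞`. -/
noncomputable def betaIdx (a b : ℕ → Ideal S) (n : ℕ) : ℕ∞ :=
  sInf {d : ℕ∞ | ∃ m : ℕ, 0 < m ∧ ¬ a n ≤ b m ∧ d = (m : ℕ∞)}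

/-- `ρ^n(a, b) = sup { s / β_s(a, b) : s ≥ n, β_s(a, b) < ∞ }`. -/
noncomputable def rhoN (a b : ℕ → Ideal S) (n : ℕ) : EReal :=
  sSup {x : EReal | ∃ s d : ℕ, n ≤ s ∧ 0 < s ∧ betaIdx a b s = (d : ℕ∞) ∧
    x = (((s : ℝ) / (d : ℝ) : ℝ) : EReal)}

/-- `ρ^lim(a, b) = lim_{n → ∞} ρ^n(a, b)`, the limit of the nonincreasing sequence `ρ^n`,
i.e. its infimum. -/
noncomputable def rhoLim (a b : ℕ → Ideal S) : EReal :=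
  ⨅ n : ℕ, rhoN a b n

end Preamble

section Valuations

variable {S : Type u} [CommRing S] [IsDomain S]

/-- A (discrete) valuation of the quotient field `K` of `S`: a function `v : K → ℤ` with
`v (x * y) = v x + v y` and `v (x + y) ≥ min (v x) (v y)` (for nonzero elements). -/
structure ValuationOn (S : Type u) [CommRing S] [IsDomain S] where
  v : FractionRing S → ℤ
  map_mul : ∀ x y : FractionRing S, x ≠ 0 → y ≠ 0 → v (x * y) = v x + v y
  min_le_map_add : ∀ x y : FractionRing S, x ≠ 0 → y ≠ 0 → x + y ≠ 0 →
    min (v x) (v y) ≤ v (x + y)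

/-- A valuation of the quotient field is supported on `S` if it is nonnegative on `S`. -/
def ValuationOn.Supported (w : ValuationOn S) : Prop :=
  ∀ x : S, x ≠ 0 → 0 ≤ w.v (algebraMap S (FractionRing S) x)

/-- `v(I) = min { v x : x ∈ I, x ≠ 0 }`. -/
noncomputable def idealVal (w : ValuationOn S) (I : Ideal S) : ℤ :=
  sInf {m : ℤ | ∃ x ∈ I, x ≠ 0 ∧ w.v (algebraMap S (FractionRing S) x) = m}

/-- The skew Waldschmidt constant `v̂(a) = inf_{n ≥ 1} v(a n) / n (= lim_{n → ∞} v(a n)/n)`. -/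
noncomputable def skewWald (w : ValuationOn S) (a : ℕ → Ideal S) : ℝ :=
  sInf {t : ℝ | ∃ n : ℕ, 0 < n ∧ t = (idealVal w (a n) : ℝ) / (n : ℝ)}

/-- `β_n^v(a, b) = inf { d ≥ 1 : v(a n) < v(b d) }`, with `inf ∅ = ∞`. -/
noncomputable def betaVal (w : ValuationOn S) (a b : ℕ → Ideal S) (n : ℕ) : ℕ∞ :=
  sInf {d : ℕ∞ | ∃ m : ℕ, 0 < m ∧ idealVal w (a n) < idealVal w (b m) ∧ d = (m : ℕ∞)}

end Valuations

section Domains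

/-- `S` is a finitely generated algebra over a field. -/
structure FieldBase (S : Type u) [CommRing S] where
  F : Type u
  [fld : Field F]
  [alg : Algebra F S]
  fg : Algebra.FiniteType F S

/-- `S` is finitely generated over a Noetherian integrally closed domain `R` with the
property that every finitely generated `R`-algebra (domain) has module-finite integral
closure (in its fraction field). -/
structure NagataBase (S : Type u) [CommRing S] where
  R : Type u
  [cring : CommRing R]
  [dom : IsDomain R]
  [noeth : IsNoetherianRing R]
  [intClosed : IsIntegrallyClosed R]
  [alg : Algebra R S]
  fg : Algebra.FiniteType R S
  finiteIntegralClosure : ∀ (A : Type u) [CommRing A] [IsDomain A] [Algebra R A],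
    Algebra.FiniteType R A → Module.Finite A (integralClosure A (FractionRing A))

/-- `S` is a complete local Noetherian ring, or finitely generated over a field or over `ℤ`,
or, more generally, finitely generated over a Noetherian integrally closed domain `R` such
that every finitely generated `R`-algebra has a module-finite integral closure. -/
def AdmissibleDomain (S : Type u) [CommRing S] : Prop :=
  (IsNoetherianRing S ∧ ∃ m : Ideal S, m.IsMaximal ∧ (∀ I : Ideal S, I.IsMaximal → I = m) ∧
    IsAdicComplete m S)
  ∨ Nonempty (FieldBase S) ∨ Algebra.FiniteType ℤ S ∨ Nonempty (NagataBase S)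

end Domains
section AuxVal

variable {S : Type u} [CommRing S] [IsDomain S] (w : ValuationOn S)

private lemma phi_ne_zero {x : S} (hx : x ≠ 0) : (algebraMap S (FractionRing S) x) ≠ 0 :=
  (map_ne_zero_iff _ (IsFractionRing.injective S (FractionRing S))).mpr hx

private lemma v_mul {x y : S} (hx : x ≠ 0) (hy : y ≠ 0) :
    w.v (algebraMap S (FractionRing S) (x * y)) =
      w.v (algebraMap S (FractionRing S) x) + w.v (algebraMap S (FractionRing S) y) := by
  rw [map_mul]
  exact w.map_mul _ _ (phi_ne_zero hx) (phi_ne_zero hy)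

private lemma valSet_bddBelow (hw : w.Supported) (I : Ideal S) :
    BddBelow {m : ℤ | ∃ x ∈ I, x ≠ 0 ∧ w.v (algebraMap S (FractionRing S) x) = m} := by
  refine ⟨0, ?_⟩
  rintro m ⟨x, _, hx, rfl⟩
  exact hw x hx

private lemma valSet_nonempty {I : Ideal S} (hI : I ≠ ⊥) :
    Set.Nonempty {m : ℤ | ∃ x ∈ I, x ≠ 0 ∧ w.v (algebraMap S (FractionRing S) x) = m} := by
  obtain ⟨x, hxI, hx⟩ := Submodule.exists_mem_ne_zero_of_ne_bot hI
  exact ⟨_, x, hxI, hx, rfl⟩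

private lemma idealVal_mem (hw : w.Supported) {I : Ideal S} (hI : I ≠ ⊥) :
    ∃ x ∈ I, x ≠ 0 ∧ w.v (algebraMap S (FractionRing S) x) = idealVal w I :=
  Int.csInf_mem (valSet_nonempty w hI) (valSet_bddBelow w hw I)

private lemma idealVal_le (hw : w.Supported) {I : Ideal S} {x : S} (hxI : x ∈ I) (hx : x ≠ 0) :
    idealVal w I ≤ w.v (algebraMap S (FractionRing S) x) :=
  csInf_le (valSet_bddBelow w hw I) ⟨x, hxI, hx, rfl⟩

private lemma idealVal_nonneg (hw : w.Supported) {I : Ideal S} (hI : I ≠ ⊥) :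
    0 ≤ idealVal w I := by
  obtain ⟨x, _, hx, h⟩ := idealVal_mem w hw hI
  rw [← h]; exact hw x hx

private lemma idealVal_mono (hw : w.Supported) {I J : Ideal S} (h : I ≤ J) (hI : I ≠ ⊥) :
    idealVal w J ≤ idealVal w I := by
  obtain ⟨x, hxI, hx, hv⟩ := idealVal_mem w hw hI
  rw [← hv]
  exact idealVal_le w hw (h hxI) hx

private lemma idealVal_mul_mem_le (hw : w.Supported) {I J : Ideal S} {z : S}
    (hz : z ∈ I * J) (hz0 : z ≠ 0) :
    idealVal w I + idealVal w J ≤ w.v (algebraMap S (FractionRing S) z) := by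
  have key : ∀ z ∈ I * J, z ≠ 0 →
      idealVal w I + idealVal w J ≤ w.v (algebraMap S (FractionRing S) z) := by
    intro z hzm
    refine Submodule.mul_induction_on hzm ?_ ?_
    · intro a ha c hc hac
      have ha0 : a ≠ 0 := fun h => hac (by simp [h])
      have hc0 : c ≠ 0 := fun h => hac (by simp [h])
      rw [v_mul w ha0 hc0]
      exact add_le_add (idealVal_le w hw ha ha0) (idealVal_le w hw hc hc0)
    · intro p q hp hq hpq
      by_cases hp0 : p = 0
      · subst hp0; simpa using hq (by simpa using hpq)
      by_cases hq0 : q = 0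
      · subst hq0; simpa using hp (by simpa using hpq)
      have h1 := w.min_le_map_add (algebraMap S (FractionRing S) p)
        (algebraMap S (FractionRing S) q) (phi_ne_zero hp0) (phi_ne_zero hq0)
        (by rw [← map_add]; exact phi_ne_zero hpq)
      rw [← map_add] at h1
      exact le_trans (le_min (hp hp0) (hq hq0)) h1
  exact key z hz hz0

private lemma idealVal_mul (hw : w.Supported) {I J : Ideal S} (hI : I ≠ ⊥) (hJ : J ≠ ⊥) :
    idealVal w (I * J) = idealVal w I + idealVal w J := by
  obtain ⟨x, hxI, hx, hvx⟩ := idealVal_mem w hw hI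
  obtain ⟨y, hyJ, hy, hvy⟩ := idealVal_mem w hw hJ
  have hxy : x * y ≠ 0 := mul_ne_zero hx hy
  apply le_antisymm
  · calc idealVal w (I * J) ≤ w.v (algebraMap S (FractionRing S) (x * y)) :=
        idealVal_le w hw (Ideal.mul_mem_mul hxI hyJ) hxy
      _ = idealVal w I + idealVal w J := by rw [v_mul w hx hy, hvx, hvy]
  · have hIJ : I * J ≠ ⊥ := by
      intro h
      have : x * y ∈ (⊥ : Ideal S) := h ▸ Ideal.mul_mem_mul hxI hyJ
      exact hxy (by simpa using this)
    obtain ⟨z, hzIJ, hz, hvz⟩ := idealVal_mem w hw hIJ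
    rw [← hvz]
    exact idealVal_mul_mem_le w hw hzIJ hz

private lemma pow_ne_bot {I : Ideal S} (hI : I ≠ ⊥) (n : ℕ) : I ^ n ≠ ⊥ := by
  obtain ⟨x, hxI, hx⟩ := Submodule.exists_mem_ne_zero_of_ne_bot hI
  intro h
  have : x ^ n ∈ (⊥ : Ideal S) := h ▸ Ideal.pow_mem_pow hxI n
  exact pow_ne_zero n hx (by simpa using this)

private lemma idealVal_pow (hw : w.Supported) {I : Ideal S} (hI : I ≠ ⊥) (n : ℕ) (hn : 1 ≤ n) :
    idealVal w (I ^ n) = n * idealVal w I := by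
  induction n with
  | zero => omega
  | succ m ih =>
    rcases Nat.eq_or_lt_of_le hn with h | h
    · simp [← h]
    · have hm : 1 ≤ m := by omega
      rw [pow_succ, idealVal_mul w hw (pow_ne_bot hI m) hI, ih hm]
      push_cast; ring

end AuxVal
/-- **Lemma.** Let `S` be a Noetherian domain, `bb` a nonzero ideal, `b` a graded family of
nonzero ideals which is `bb`-equivalent, and `v` a valuation of the quotient field of `S`
supported on `S`. Then `v̂(b) = v(bb)`. -/
theorem statement9 {S : Type u} [CommRing S] [IsDomain S] [IsNoetherianRing S]
    (bb : Ideal S) (hbb : bb ≠ ⊥)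
    (b : ℕ → Ideal S) (hb : GradedFamily b) (hbnz : ∀ i : ℕ, 1 ≤ i → b i ≠ ⊥)
    (heq : BEquivalent bb b)
    (w : ValuationOn S) (hw : w.Supported) :
    skewWald w b = (idealVal w bb : ℝ) := by
  obtain ⟨k, hk⟩ := heq
  have hVbb0 : 0 ≤ idealVal w bb := idealVal_nonneg w hw hbb
  have hupper : ∀ n : ℕ, 1 ≤ n → idealVal w (b n) ≤ n * idealVal w bb := by
    intro n hn
    rw [← idealVal_pow w hw hbb n hn]
    exact idealVal_mono w hw (hk n hn).2 (pow_ne_bot hbb n)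
  have hpow : ∀ n m : ℕ, b n ^ (m + 1) ≤ b (n * (m + 1)) := by
    intro n m
    induction m with
    | zero => simp
    | succ j ih =>
      calc b n ^ (j + 2) = b n ^ (j + 1) * b n := by rw [pow_succ]
        _ ≤ b (n * (j + 1)) * b n := Ideal.mul_mono ih le_rfl
        _ ≤ b (n * (j + 1) + n) := hb.2 _ _
        _ = b (n * (j + 2)) := by ring_nf
  have hlower : ∀ n : ℕ, 1 ≤ n → (n : ℤ) * idealVal w bb ≤ idealVal w (b n) := by
    intro n hn
    by_contra hcon
    push_neg at hcon
    set V := idealVal w bb with hVdef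
    set B := idealVal w (b n) with hBdef
    have key : ∀ m : ℕ, 1 ≤ m → k + 1 ≤ n * m → ((n * m : ℕ) - (k : ℤ)) * V ≤ m * B := by
      intro m hm hnm
      have h1 : b (n * m) ≤ bb ^ (n * m - k) := by
        have := (hk (n * m - k) (by omega)).1
        rwa [show n * m - k + k = n * m by omega] at this
      have h2 : idealVal w (bb ^ (n * m - k)) ≤ idealVal w (b (n * m)) :=
        idealVal_mono w hw h1 (hbnz _ (by nlinarith))
      rw [idealVal_pow w hw hbb (n * m - k) (by omega)] at h2
      have h3 : idealVal w (b (n * m)) ≤ m * B := by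
        have hle : b n ^ m ≤ b (n * m) := by
          obtain ⟨j, rfl⟩ : ∃ j, m = j + 1 := ⟨m - 1, by omega⟩
          exact hpow n j
        have h4 := idealVal_mono w hw hle (pow_ne_bot (hbnz n hn) m)
        rwa [idealVal_pow w hw (hbnz n hn) m hm] at h4
      calc ((n * m : ℕ) - (k : ℤ)) * V = ((n * m - k : ℕ) : ℤ) * V := by
            rw [Nat.cast_sub (by omega)]
        _ ≤ idealVal w (b (n * m)) := h2
        _ ≤ m * B := h3
    set m : ℕ := (k * V).toNat + k + 1 with hmdef
    have hm1 : 1 ≤ m := by omega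
    have hnm : k + 1 ≤ n * m := by nlinarith
    have hkey := key m hm1 hnm
    have hmV : (k : ℤ) * V + 1 ≤ (m : ℤ) := by
      have := Int.self_le_toNat (k * V)
      push_cast [hmdef]
      omega
    have hB : B + 1 ≤ (n : ℤ) * V := hcon
    have hmB : (m : ℤ) * B ≤ (m : ℤ) * ((n : ℤ) * V - 1) :=
      mul_le_mul_of_nonneg_left (by omega) (by positivity)
    push_cast at hkey
    have h5 : ((n : ℤ) * (m : ℤ) - (k : ℤ)) * V ≤ (m : ℤ) * ((n : ℤ) * V - 1) :=
      le_trans hkey hmB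
    have h6 : ((n : ℤ) * (m : ℤ) - (k : ℤ)) * V - (m : ℤ) * ((n : ℤ) * V - 1) =
        (m : ℤ) - (k : ℤ) * V := by ring
    linarith
  have hV : ∀ n : ℕ, 1 ≤ n → idealVal w (b n) = n * idealVal w bb := fun n hn =>
    le_antisymm (hupper n hn) (hlower n hn)
  have hset : {t : ℝ | ∃ n : ℕ, 0 < n ∧ t = (idealVal w (b n) : ℝ) / (n : ℝ)} =
      {((idealVal w bb : ℤ) : ℝ)} := by
    ext t
    simp only [Set.mem_setOf_eq, Set.mem_singleton_iff]
    constructor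
    · rintro ⟨n, hn, rfl⟩
      rw [hV n hn]
      have hn0 : (n : ℝ) ≠ 0 := Nat.cast_ne_zero.mpr hn.ne'
      push_cast
      field_simp
    · rintro rfl
      exact ⟨1, one_pos, by rw [hV 1 le_rfl]; push_cast; ring⟩
  rw [skewWald, hset, csInf_singleton]
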